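/- Let R be a commutative ring and ℒ ⊂ R((t))^n a lattice such that ℒ ⊕ t^{-1}R[t^{-1}]^n = R((t))^n as R-modules. Writing e_j = u_j + m_j with u_j ∈ ℒ and m_j ∈ t^{-1}R[t^{-1}]^n for the standard basis vectors e_j, the elements u_1, …, u_n form an R[[t]]-basis of ℒ. -/

import Mathlib

/-!
Since `ℒ ∩ t⁻¹R[t⁻¹]ⁿ = 0`, an element of `ℒ` whose coordinates have no terms of positive degree
is determined by its constant terms, hence equals `∑ⱼ cⱼ uⱼ`. Decomposing `t⁻¹v` for `v ∈ ℒ` shows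
`ℒ ⊆ span (uⱼ) + t ℒ`, and `t` lies in the Jacobson radical of `R⟦t⟧`, so Nakayama gives
`ℒ = span (uⱼ)`. Then the `uⱼ` span `R⸨t⸩ⁿ`, so they are linearly independent over `R⸨t⸩` (a
surjective endomorphism of a finitely generated module is injective), hence over `R⟦t⟧`.
-/

noncomputable section

variable (R : Type*) [CommRing R]

/-- The `R`-submodule-set `t⁻¹R[t⁻¹]^n ⊂ R⸨t⸩^n` of vectors all of whose coordinates
have vanishing coefficients in degrees `≥ 0`. -/
def negPart (n : ℕ) : Set (Fin n → LaurentSeries R) :=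
  {x | ∀ j : Fin n, ∀ m : ℤ, 0 ≤ m → (x j).coeff m = 0}

/-- The `j`-th standard basis vector of `R⸨t⸩^n`. -/
def stdVec (n : ℕ) (j : Fin n) : Fin n → LaurentSeries R :=
  fun l => if l = j then 1 else 0

open PowerSeries Submodule
open scoped LaurentSeries

section

variable {R}

theorem PowerSeries.span_X_le_jacobson_bot : Ideal.span {(X : R⟦X⟧)} ≤ Ideal.jacobson ⊥ := by
  intro f hf
  obtain ⟨g, rfl⟩ := Ideal.mem_span_singleton.mp hf
  rw [Ideal.mem_jacobson_bot]
  intro y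
  simp [isUnit_iff_constantCoeff]

theorem Pi.linearIndependent_of_top_le_span {S ι : Type*} [CommRing S] [Fintype ι]
    {v : ι → ι → S} (hv : ⊤ ≤ span S (Set.range v)) : LinearIndependent S v := by
  rw [linearIndependent_iff_injective_fintypeLinearCombination]
  refine OrzechProperty.injective_of_surjective_endomorphism _ ?_
  rwa [← LinearMap.range_eq_top, Fintype.range_linearCombination, eq_top_iff]

theorem LaurentSeries.injective_powerSeries_smul_one :
    Function.Injective fun f : R⟦X⟧ => f • (1 : R⸨X⸩) := by
  simpa [Algebra.smul_def] using HahnSeries.ofPowerSeries_injective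

variable {n : ℕ}

theorem coeff_C_smul_apply (r : R) (x : Fin n → R⸨X⸩) (j : Fin n) (k : ℤ) :
    ((C r • x) j).coeff k = r * (x j).coeff k := by
  simp [Algebra.smul_def]

theorem coeff_X_smul_apply (x : Fin n → R⸨X⸩) (j : Fin n) (k : ℤ) :
    (((X : R⟦X⟧) • x) j).coeff k = (x j).coeff (k - 1) := by
  simpa [Algebra.smul_def] using
    HahnSeries.coeff_single_mul_add (r := (1 : R)) (x := x j) (a := k - 1) (b := 1)

theorem X_smul_single_neg_one_smul (x : Fin n → R⸨X⸩) :
    (X : R⟦X⟧) • (HahnSeries.single (-1 : ℤ) (1 : R) • x) = x := by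
  rw [← algebraMap_smul R⸨X⸩ (X : R⟦X⟧), smul_smul]
  simp

variable (R n) in
def negPartAddSubgroup : AddSubgroup (Fin n → R⸨X⸩) where
  carrier := negPart R n
  add_mem' hx hy j k hk := by simp [hx j k hk, hy j k hk]
  zero_mem' _ _ _ := rfl
  neg_mem' hx j k hk := by simp [hx j k hk]

theorem C_smul_mem_negPart (r : R) {x : Fin n → R⸨X⸩} (hx : x ∈ negPart R n) :
    C r • x ∈ negPart R n := fun j k hk => by
  rw [coeff_C_smul_apply, hx j k hk, mul_zero]

theorem sub_sum_C_coeff_zero_smul_stdVec_mem_negPart {m : Fin n → R⸨X⸩}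
    (hm : ∀ j k, 0 < k → (m j).coeff k = 0) :
    m - ∑ j, C ((m j).coeff 0) • stdVec R n j ∈ negPart R n := by
  intro l k hk
  simp only [stdVec, Pi.sub_apply, Finset.sum_apply, Pi.smul_apply, smul_ite, smul_zero,
    Finset.sum_ite_eq, Finset.mem_univ, if_true]
  rcases hk.eq_or_lt with rfl | hk
  · simp [Algebra.smul_def]
  · simp [Algebra.smul_def, hm l k hk, hk.ne']

variable {ℒ : Submodule R⟦X⟧ (Fin n → R⸨X⸩)}

theorem eq_zero_of_mem_of_mem_negPart
    (hdec : ∀ x, ∃! u, u ∈ ℒ ∧ x - u ∈ negPart R n) {x : Fin n → R⸨X⸩} (hxL : x ∈ ℒ)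
    (hx : x ∈ negPart R n) : x = 0 :=
  (hdec x).unique ⟨hxL, by rw [sub_self]; exact (negPartAddSubgroup R n).zero_mem⟩
    ⟨ℒ.zero_mem, by rwa [sub_zero]⟩

theorem mem_span_of_coeff_pos_eq_zero (hcap : ∀ x ∈ ℒ, x ∈ negPart R n → x = 0)
    {u : Fin n → Fin n → R⸨X⸩} (hu : ∀ j, u j ∈ ℒ ∧ stdVec R n j - u j ∈ negPart R n)
    {m : Fin n → R⸨X⸩} (hmL : m ∈ ℒ) (hm : ∀ j k, 0 < k → (m j).coeff k = 0) :
    m ∈ span R⟦X⟧ (Set.range u) := by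
  set c : Fin n → R⟦X⟧ := fun j => C ((m j).coeff 0)
  have hdiff : m - ∑ j, c j • u j
      = (m - ∑ j, c j • stdVec R n j) + ∑ j, c j • (stdVec R n j - u j) := by
    simp only [smul_sub, Finset.sum_sub_distrib]
    abel
  have hsum : m = ∑ j, c j • u j := by
    rw [← sub_eq_zero]
    refine hcap _ (sub_mem hmL (sum_mem fun j _ => ℒ.smul_mem _ (hu j).1)) ?_
    rw [hdiff]
    exact (negPartAddSubgroup R n).add_mem (sub_sum_C_coeff_zero_smul_stdVec_mem_negPart hm)
      ((negPartAddSubgroup R n).sum_mem fun j _ => C_smul_mem_negPart _ (hu j).2)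
  rw [hsum]
  exact sum_mem fun j _ => smul_mem _ _ (subset_span ⟨j, rfl⟩)

theorem exists_mem_coeff_pos_sub_X_smul_eq_zero (hdec : ∀ x, ∃ u ∈ ℒ, x - u ∈ negPart R n)
    (v : Fin n → R⸨X⸩) : ∃ w ∈ ℒ, ∀ j k, 0 < k → ((v - (X : R⟦X⟧) • w) j).coeff k = 0 := by
  obtain ⟨w, hwL, hw⟩ := hdec (HahnSeries.single (-1 : ℤ) (1 : R) • v)
  refine ⟨w, hwL, fun j k hk => ?_⟩
  rw [← X_smul_single_neg_one_smul v, ← smul_sub, coeff_X_smul_apply]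
  exact hw j (k - 1) (by omega)

theorem le_span_sup_span_X_smul (hdec : ∀ x, ∃! u, u ∈ ℒ ∧ x - u ∈ negPart R n)
    {u : Fin n → Fin n → R⸨X⸩} (hu : ∀ j, u j ∈ ℒ ∧ stdVec R n j - u j ∈ negPart R n) :
    ℒ ≤ span R⟦X⟧ (Set.range u) ⊔ Ideal.span {(X : R⟦X⟧)} • ℒ := by
  intro v hv
  obtain ⟨w, hwL, hw⟩ := exists_mem_coeff_pos_sub_X_smul_eq_zero (fun x => (hdec x).exists) v
  have hspan := mem_span_of_coeff_pos_eq_zero (fun x => eq_zero_of_mem_of_mem_negPart hdec) hu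
    (sub_mem hv (ℒ.smul_mem _ hwL)) hw
  exact mem_sup.2 ⟨_, hspan, _, smul_mem_smul (Ideal.mem_span_singleton_self _) hwL,
    sub_add_cancel _ _⟩

theorem eq_span_range_of_fg (hfg : ℒ.FG) (hdec : ∀ x, ∃! u, u ∈ ℒ ∧ x - u ∈ negPart R n)
    {u : Fin n → Fin n → R⸨X⸩} (hu : ∀ j, u j ∈ ℒ ∧ stdVec R n j - u j ∈ negPart R n) :
    ℒ = span R⟦X⟧ (Set.range u) :=
  le_antisymm
    (le_of_le_smul_of_le_jacobson_bot hfg span_X_le_jacobson_bot (le_span_sup_span_X_smul hdec hu))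
    (span_le.2 <| Set.range_subset_iff.2 fun j => (hu j).1)

theorem linearIndependent_of_span_eq_top
    (hspan : span R⸨X⸩ (ℒ : Set (Fin n → R⸨X⸩)) = ⊤) {u : Fin n → Fin n → R⸨X⸩}
    (hL : ℒ = span R⟦X⟧ (Set.range u)) : LinearIndependent R⟦X⟧ u := by
  refine .restrict_scalars LaurentSeries.injective_powerSeries_smul_one
    (Pi.linearIndependent_of_top_le_span ?_)
  rw [← hspan, hL, span_span_of_tower]

end

theorem stmt14 (n : ℕ)
    (ℒ : Submodule (PowerSeries R) (Fin n → LaurentSeries R))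
    (hfg : ℒ.FG)
    (hspan : Submodule.span (LaurentSeries R) (ℒ : Set (Fin n → LaurentSeries R)) = ⊤)
    (hdec : ∀ x : Fin n → LaurentSeries R,
      ∃! u : Fin n → LaurentSeries R, u ∈ ℒ ∧ (x - u) ∈ negPart R n)
    (u : Fin n → Fin n → LaurentSeries R)
    (hu : ∀ j, u j ∈ ℒ ∧ (stdVec R n j - u j) ∈ negPart R n) :
    ∃ b : Module.Basis (Fin n) (PowerSeries R) ℒ, ∀ j, (b j : Fin n → LaurentSeries R) = u j := by
  have hL := eq_span_range_of_fg hfg hdec hu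
  exact ⟨(Module.Basis.span (linearIndependent_of_span_eq_top hspan hL)).map
    (LinearEquiv.ofEq _ _ hL.symm), fun j => by simp [Module.Basis.span_apply]⟩

end
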